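/- Let P₁, …, P_k be mutually equivalent probability measures on (Ω, 𝓕), let M = {Σ_{i=1}^k α_i P_i : α_i ≥ 0, Σ_{i=1}^k α_i = 1}, let 𝓕_n be a sub-σ-algebra of 𝓕, and let ξ be a random variable integrable with respect to each P_i. Then almost surely sup_{Q∈M} E^Q[ξ | 𝓕_n] = max_{1≤i≤k} E^{P_i}[ξ | 𝓕_n]; that is, for every Q ∈ M one has E^Q[ξ | 𝓕_n] ≤ max_{1≤i≤k} E^{P_i}[ξ | 𝓕_n] a.s., and this bound is attained since each P_i belongs to M. -/

import Mathlib

open MeasureTheory Filter Set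
open scoped ENNReal

/-- The convex set of measures generated by the finite family `P`. -/
def mixSet {Ω : Type*} {m0 : MeasurableSpace Ω} {k : ℕ} (P : Fin (k + 1) → Measure Ω) :
    Set (Measure Ω) :=
  {Q | ∃ α : Fin (k + 1) → ℝ, (∀ i, 0 ≤ α i) ∧ (∑ i, α i = 1) ∧
    Q = ∑ i, (ENNReal.ofReal (α i)) • P i}

/-!
Let `g = max_i E^{P i}[ξ | 𝓖]`. On every `𝓖`-measurable set `s` on which `g` is bounded,
`∫_s ξ dP_i = ∫_s E^{P i}[ξ | 𝓖] dP_i ≤ ∫_s g dP_i`; averaging with the weights of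
`Q = ∑ α_i P_i` gives `∫_s E^Q[ξ | 𝓖] dQ = ∫_s ξ dQ ≤ ∫_s g dQ`. Both integrands are
`𝓖`-measurable, so `E^Q[ξ | 𝓖] ≤ g` holds `Q`-a.e. Only sets on which `g` is bounded are
used because `g` need not be integrable: `E^{P j}[ξ | 𝓖]` need not be `P i`-integrable.
Finally `P 0 ≪ Q`, since some `α_j` is positive and `P 0 ≪ P j`.
-/

namespace MeasureTheory

variable {Ω : Type*} {m m0 : MeasurableSpace Ω} {μ : Measure Ω}

theorem integrableOn_of_forall_abs_le {g : Ω → ℝ} {s : Set Ω} (hs : MeasurableSet s)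
    (hμs : μ s ≠ ∞) (hg : AEStronglyMeasurable g μ) {C : ℝ} (hC : ∀ x ∈ s, |g x| ≤ C) :
    IntegrableOn g s μ :=
  Measure.integrableOn_of_bounded hμs hg (ae_restrict_of_forall_mem hs hC)

theorem ae_le_of_forall_setIntegral_le_of_stronglyMeasurable (hm : m ≤ m0) {f g : Ω → ℝ}
    (hf : StronglyMeasurable[m] f) (hg : StronglyMeasurable[m] g)
    (hfi : Integrable f μ) (hgi : Integrable g μ)
    (hfg : ∀ s, MeasurableSet[m] s → ∫ x in s, f x ∂μ ≤ ∫ x in s, g x ∂μ) : f ≤ᵐ[μ] g :=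
  ae_le_of_ae_le_trim <| ae_le_of_forall_setIntegral_le (hfi.trim hm hf) (hgi.trim hm hg)
    fun s hs _ => by
      rw [← setIntegral_trim hm hf hs, ← setIntegral_trim hm hg hs]
      exact hfg s hs

theorem ae_le_of_forall_setIntegral_le_of_abs_le (hm : m ≤ m0) [IsFiniteMeasure μ]
    {f g : Ω → ℝ} (hf : StronglyMeasurable[m] f) (hfi : Integrable f μ)
    (hg : StronglyMeasurable[m] g)
    (hfg : ∀ s, MeasurableSet[m] s → ∀ C : ℝ, (∀ x ∈ s, |g x| ≤ C) →
      ∫ x in s, f x ∂μ ≤ ∫ x in s, g x ∂μ) :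
    f ≤ᵐ[μ] g := by
  set B : ℕ → Set Ω := fun N => {x | |g x| ≤ N}
  have hB : ∀ N, MeasurableSet[m] (B N) := fun N => hg.norm.measurable measurableSet_Iic
  have hle_on : ∀ N, ∀ᵐ x ∂μ, (B N).indicator f x ≤ (B N).indicator g x := by
    intro N
    have hgB : IntegrableOn g (B N) μ := integrableOn_of_forall_abs_le (hm _ (hB N))
      (measure_ne_top μ _) (hg.mono hm).aestronglyMeasurable fun _ hx => hx
    refine ae_le_of_forall_setIntegral_le_of_stronglyMeasurable hm (hf.indicator (hB N))
      (hg.indicator (hB N)) (hfi.indicator (hm _ (hB N)))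
      (hgB.integrable_indicator (hm _ (hB N))) fun s hs => ?_
    rw [setIntegral_indicator (hm _ (hB N)), setIntegral_indicator (hm _ (hB N))]
    exact hfg _ (hs.inter (hB N)) N fun _ hx => hx.2
  filter_upwards [ae_all_iff.2 hle_on] with x hx
  obtain ⟨N, hN⟩ := exists_nat_ge |g x|
  have hxB : x ∈ B N := hN
  simpa only [indicator_of_mem hxB] using hx N

theorem setIntegral_le_of_condExp_le (hm : m ≤ m0) [SigmaFinite (μ.trim hm)] {ξ g : Ω → ℝ}
    {s : Set Ω} (hs : MeasurableSet[m] s) (hξ : Integrable ξ μ) (hg : IntegrableOn g s μ)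
    (hle : ∀ x ∈ s, μ[ξ|m] x ≤ g x) :
    ∫ x in s, ξ x ∂μ ≤ ∫ x in s, g x ∂μ := by
  rw [← setIntegral_condExp hm hξ hs]
  exact setIntegral_mono_on integrable_condExp.integrableOn hg (hm s hs) hle

section FiniteMixture

variable {ι : Type*} [Fintype ι] {ν : ι → Measure Ω} {c : ι → ℝ≥0∞}

theorem isFiniteMeasure_sum_smul [∀ i, IsFiniteMeasure (ν i)] (hc : ∀ i, c i ≠ ∞) :
    IsFiniteMeasure (∑ i, c i • ν i) :=
  have := fun i => (ν i).smul_finite (hc i)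
  inferInstance

theorem integrable_sum_smul_measure (hc : ∀ i, c i ≠ ∞) {f : Ω → ℝ}
    (hf : ∀ i, Integrable f (ν i)) : Integrable f (∑ i, c i • ν i) :=
  integrable_finsetSum_measure.2 fun i _ => (hf i).smul_measure (hc i)

theorem setIntegral_sum_smul_measure (hc : ∀ i, c i ≠ ∞) {f : Ω → ℝ} {s : Set Ω}
    (hs : MeasurableSet s) (hf : ∀ i, IntegrableOn f s (ν i)) :
    ∫ x in s, f x ∂(∑ i, c i • ν i) = ∑ i, (c i).toReal * ∫ x in s, f x ∂(ν i) := by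
  rw [← integral_indicator hs, integral_finsetSum_measure fun i _ =>
    ((hf i).integrable_indicator hs).smul_measure (hc i)]
  simp_rw [integral_smul_measure, integral_indicator hs, smul_eq_mul]

theorem absolutelyContinuous_sum_smul (i : ι) (hci : c i ≠ 0) : ν i ≪ ∑ j, c j • ν j :=
  (Measure.absolutelyContinuous_smul hci).trans <| Measure.absolutelyContinuous_of_le <|
    Finset.single_le_sum (f := fun j => c j • ν j) (fun _ _ => Measure.zero_le _)
      (Finset.mem_univ i)

theorem condExp_sum_smul_measure_ae_le_iSup (hm : m ≤ m0) [∀ i, IsFiniteMeasure (ν i)]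
    (hc : ∀ i, c i ≠ ∞) {ξ : Ω → ℝ} (hξ : ∀ i, Integrable ξ (ν i)) :
    ∀ᵐ ω ∂(∑ i, c i • ν i), (∑ i, c i • ν i)[ξ|m] ω ≤ ⨆ i, (ν i)[ξ|m] ω := by
  have := isFiniteMeasure_sum_smul (ν := ν) hc
  set g : Ω → ℝ := fun ω => ⨆ i, (ν i)[ξ|m] ω
  have hg : StronglyMeasurable[m] g :=
    (Measurable.iSup fun i => stronglyMeasurable_condExp.measurable).stronglyMeasurable
  refine ae_le_of_forall_setIntegral_le_of_abs_le hm stronglyMeasurable_condExp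
    integrable_condExp hg fun s hs C hC => ?_
  have hg_int : ∀ i, IntegrableOn g s (ν i) := fun i =>
    integrableOn_of_forall_abs_le (hm s hs) (measure_ne_top _ _)
      (hg.mono hm).aestronglyMeasurable hC
  calc ∫ x in s, (∑ i, c i • ν i)[ξ|m] x ∂(∑ i, c i • ν i)
      = ∫ x in s, ξ x ∂(∑ i, c i • ν i) :=
        setIntegral_condExp hm (integrable_sum_smul_measure hc hξ) hs
    _ = ∑ i, (c i).toReal * ∫ x in s, ξ x ∂(ν i) :=
        setIntegral_sum_smul_measure hc (hm s hs) fun i => (hξ i).integrableOn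
    _ ≤ ∑ i, (c i).toReal * ∫ x in s, g x ∂(ν i) :=
        Finset.sum_le_sum fun i _ => mul_le_mul_of_nonneg_left
          (setIntegral_le_of_condExp_le hm hs (hξ i) (hg_int i) fun x _ =>
            le_ciSup (f := fun i => (ν i)[ξ|m] x) (Set.finite_range _).bddAbove i)
          ENNReal.toReal_nonneg
    _ = ∫ x in s, g x ∂(∑ i, c i • ν i) :=
        (setIntegral_sum_smul_measure hc (hm s hs) hg_int).symm

end FiniteMixture

end MeasureTheory

theorem mem_mixSet_self {Ω : Type*} {m0 : MeasurableSpace Ω} {k : ℕ}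
    (P : Fin (k + 1) → Measure Ω) (i : Fin (k + 1)) : P i ∈ mixSet P := by
  refine ⟨Pi.single i 1, fun j => ?_, by simp, ?_⟩
  · by_cases h : j = i <;> simp [h]
  · rw [Finset.sum_eq_single i (fun j _ hj => by simp [hj]) (by simp)]
    simp

/-- **Lemma `q2` of the paper.**
For mutually equivalent probability measures `P 0, …, P k`, their convex hull `M`,
a sub-σ-algebra `𝓖 ≤ 𝓕` and a random variable `ξ` integrable with respect to each
`P i`, one has `sup_{Q ∈ M} E^Q[ξ | 𝓖] = max_i E^{P i}[ξ | 𝓖]` almost surely: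
every `Q ∈ M` satisfies `E^Q[ξ | 𝓖] ≤ max_i E^{P i}[ξ | 𝓖]` a.s., and the bound is
attained since each `P i` belongs to `M`. -/
theorem stmt10 {Ω : Type*} {m0 : MeasurableSpace Ω}
    (k : ℕ) (P : Fin (k + 1) → Measure Ω)
    (hP_prob : ∀ i, IsProbabilityMeasure (P i))
    (hP_equiv : ∀ i j, P i ≪ P j)
    (𝓖 : MeasurableSpace Ω) (h𝓖 : 𝓖 ≤ m0)
    (ξ : Ω → ℝ) (hξ_int : ∀ i, Integrable ξ (P i)) :
    (∀ Q ∈ mixSet P, ∀ᵐ ω ∂(P 0),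
        (Q[ξ | 𝓖]) ω ≤ ⨆ i : Fin (k + 1), ((P i)[ξ | 𝓖]) ω) ∧
    (∀ i : Fin (k + 1), P i ∈ mixSet P) := by
  refine ⟨?_, mem_mixSet_self P⟩
  rintro Q ⟨α, hα_nonneg, hα_sum, rfl⟩
  obtain ⟨j, hj⟩ : ∃ j, 0 < α j := by
    by_contra! h
    linarith [Finset.sum_nonpos fun i (_ : i ∈ Finset.univ) => h i]
  have : ∀ i, IsFiniteMeasure (P i) := fun i =>
    have := hP_prob i; inferInstance
  have hP0 : P 0 ≪ ∑ i, ENNReal.ofReal (α i) • P i :=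
    (hP_equiv 0 j).trans <| absolutelyContinuous_sum_smul j (ENNReal.ofReal_pos.2 hj).ne'
  exact hP0.ae_le <| condExp_sum_smul_measure_ae_le_iSup h𝓖 (fun _ => ENNReal.ofReal_ne_top)
    hξ_int
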